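/- For any two density matrices ρ, σ on a finite-dimensional Hilbert space, 1 - √F(ρ,σ) ≤ (1/2)‖ρ - σ‖₁, where ‖A‖₁ = tr√(A†A) is the trace norm. -/

import Mathlib

/-! With `R = √ρ` and `S = √σ` the fidelity is `√F = ‖RS‖₁ ≥ Re tr(RS)`, and for unit-trace states
`tr (R - S)² = 2 - 2 Re tr(RS)`. So it suffices to prove the Powers–Størmer inequality
`tr (R - S)² ≤ ‖R² - S²‖₁`. For this, let `W = sign (R - S)`, so `-1 ≤ W ≤ 1` bounds
`tr ((R² - S²) W) ≤ ‖R² - S²‖₁`. Writing `2(R² - S²) = (R - S)(R + S) + (R + S)(R - S)` gives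
`tr ((R² - S²) W) = tr ((R + S) |R - S|)`, and this exceeds `tr (R - S)²` by
`2 tr (S (R - S)⁺) + 2 tr (R (R - S)⁻) ≥ 0`. -/

open Matrix
open scoped Classical ComplexOrder

/-- The positive semidefinite square root of a matrix (junk value `0` off PSD matrices). -/
noncomputable def psdSqrt {d : Type*} [Fintype d] [DecidableEq d]
    (A : Matrix d d ℂ) : Matrix d d ℂ :=
  if h : A.PosSemidef then
    (h.1.eigenvectorUnitary : Matrix d d ℂ) * diagonal ((↑) ∘ (√·) ∘ h.1.eigenvalues) *
      (star h.1.eigenvectorUnitary : Matrix d d ℂ)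
  else 0

/-- Uhlmann fidelity `F(ρ,σ) = (tr √(√σ ρ √σ))²`. -/
noncomputable def qFidelity {d : Type*} [Fintype d] [DecidableEq d]
    (ρ σ : Matrix d d ℂ) : ℝ :=
  ((psdSqrt (psdSqrt σ * ρ * psdSqrt σ)).trace.re) ^ 2

/-- Trace norm `‖A‖₁ = tr √(A†A)`. -/
noncomputable def traceNorm {d : Type*} [Fintype d] [DecidableEq d]
    (A : Matrix d d ℂ) : ℝ :=
  (psdSqrt (Aᴴ * A)).trace.re

open scoped MatrixOrder

namespace Matrix

section RCLike

variable {d 𝕜 : Type*} [Fintype d] [DecidableEq d] [RCLike 𝕜]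

lemma trace_conjStarAlgAut (U : unitary (Matrix d d 𝕜)) (X : Matrix d d 𝕜) :
    (Unitary.conjStarAlgAut 𝕜 _ U X).trace = X.trace := by
  rw [Unitary.conjStarAlgAut_apply, trace_mul_cycle, Unitary.coe_star_mul_self, Matrix.one_mul]

lemma IsHermitian.trace_cfc {A : Matrix d d 𝕜} (hA : A.IsHermitian) (f : ℝ → ℝ) :
    (cfc f A).trace = ∑ i, (f (hA.eigenvalues i) : 𝕜) := by
  rw [hA.cfc_eq, IsHermitian.cfc, trace_conjStarAlgAut, trace_diagonal]
  rfl

lemma trace_mul_nonneg {A B : Matrix d d 𝕜} (hA : 0 ≤ A) (hB : 0 ≤ B) : 0 ≤ (A * B).trace := by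
  have hconj : 0 ≤ CFC.sqrt A * B * CFC.sqrt A := by
    simpa [(CFC.sqrt_nonneg A).isSelfAdjoint.star_eq] using
      star_right_conjugate_nonneg hB (CFC.sqrt A)
  rw [← CFC.sqrt_mul_sqrt_self A hA, Matrix.mul_assoc, trace_mul_comm]
  exact (nonneg_iff_posSemidef.mp hconj).trace_nonneg

lemma trace_mul_le_trace_abs {A W : Matrix d d 𝕜} (hA : IsSelfAdjoint A) (hW₁ : -1 ≤ W)
    (hW₂ : W ≤ 1) : (A * W).trace ≤ (CFC.abs A).trace := by
  have hsplit : CFC.abs A - A * W = A⁺ * (1 - W) + A⁻ * (1 + W) :=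
    calc CFC.abs A - A * W = (A⁺ + A⁻) - (A⁺ - A⁻) * W := by
          rw [CFC.posPart_add_negPart A, CFC.posPart_sub_negPart A]
      _ = A⁺ * (1 - W) + A⁻ * (1 + W) := by noncomm_ring
  have hpos : 0 ≤ (A⁺ * (1 - W)).trace :=
    trace_mul_nonneg (CFC.posPart_nonneg A) (sub_nonneg.2 hW₂)
  have hneg : 0 ≤ (A⁻ * (1 + W)).trace :=
    trace_mul_nonneg (CFC.negPart_nonneg A) (neg_le_iff_add_nonneg'.1 hW₁)
  rw [← sub_nonneg, ← trace_sub, hsplit, trace_add]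
  exact add_nonneg hpos hneg

lemma exists_mul_eq_abs {T : Matrix d d 𝕜} (hT : IsSelfAdjoint T) :
    ∃ W, -1 ≤ W ∧ W ≤ 1 ∧ T * W = CFC.abs T ∧ W * T = CFC.abs T := by
  have hcont (f : ℝ → ℝ) : ContinuousOn f (spectrum ℝ T) := (Set.toFinite _).continuousOn _
  have hsign : cfc (fun x : ℝ => (SignType.sign x : ℝ) * x) T = CFC.abs T := by
    rw [CFC.abs_eq_cfc_norm T hT]
    exact cfc_congr fun x _ => sign_mul_self x
  refine ⟨cfc (fun x : ℝ => (SignType.sign x : ℝ)) T, ?_, ?_, ?_, ?_⟩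
  · simpa using algebraMap_le_cfc _ (-1 : ℝ) T
      (fun x _ => by rcases lt_trichotomy x 0 with h | h | h <;> simp [h]) (hcont _)
  · exact cfc_le_one _ T fun x _ => by rcases lt_trichotomy x 0 with h | h | h <;> simp [h]
  · nth_rewrite 1 [← cfc_id' ℝ T]
    rw [← cfc_mul _ _ T (hcont _) (hcont _), ← hsign]
    exact cfc_congr fun x _ => mul_comm _ _
  · nth_rewrite 2 [← cfc_id' ℝ T]
    rw [← cfc_mul _ _ T (hcont _) (hcont _), hsign]

lemma trace_sub_mul_sub_le_trace_abs {R S : Matrix d d 𝕜} (hR : 0 ≤ R) (hS : 0 ≤ S) :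
    ((R - S) * (R - S)).trace ≤ (CFC.abs (R * R - S * S)).trace := by
  set T := R - S with hT_def
  have hT : IsSelfAdjoint T := hR.isSelfAdjoint.sub hS.isSelfAdjoint
  obtain ⟨W, hW₁, hW₂, hTW, hWT⟩ := exists_mul_eq_abs hT
  have hexcess : (R + S) * CFC.abs T - T * T = 2 • (S * T⁺ + R * T⁻) := by
    have hRS : R = S + (T⁺ - T⁻) := by rw [CFC.posPart_sub_negPart T, hT_def]; abel
    calc (R + S) * CFC.abs T - T * T = (R + S) * (T⁺ + T⁻) - (T⁺ - T⁻) * (T⁺ - T⁻) := by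
          rw [CFC.posPart_add_negPart T, CFC.posPart_sub_negPart T]
      _ = 2 • (S * T⁺ + R * T⁻) := by rw [hRS]; noncomm_ring
  have hsq : (T * T).trace ≤ ((R + S) * CFC.abs T).trace := by
    rw [← sub_nonneg, ← trace_sub, hexcess, trace_smul, trace_add]
    exact nsmul_nonneg (add_nonneg (trace_mul_nonneg hS (CFC.posPart_nonneg T))
      (trace_mul_nonneg hR (CFC.negPart_nonneg T))) 2
  have hW : ((R * R - S * S) * W).trace = ((R + S) * CFC.abs T).trace := by
    have hdouble : (R * R - S * S) + (R * R - S * S) = T * (R + S) + (R + S) * T := by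
      rw [hT_def]; noncomm_ring
    have h2 : ((R * R - S * S) * W).trace + ((R * R - S * S) * W).trace
        = ((R + S) * CFC.abs T).trace + ((R + S) * CFC.abs T).trace := by
      rw [← trace_add, ← Matrix.add_mul, hdouble, Matrix.add_mul, trace_add, Matrix.mul_assoc,
        trace_mul_comm, Matrix.mul_assoc, hWT, Matrix.mul_assoc, hTW]
    simpa only [← two_mul, mul_right_inj' (two_ne_zero' 𝕜)] using h2
  have hΔ : IsSelfAdjoint (R * R - S * S) := by
    simpa only [sq] using (hR.isSelfAdjoint.pow 2).sub (hS.isSelfAdjoint.pow 2)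
  calc (T * T).trace ≤ ((R + S) * CFC.abs T).trace := hsq
    _ = ((R * R - S * S) * W).trace := hW.symm
    _ ≤ (CFC.abs (R * R - S * S)).trace := trace_mul_le_trace_abs hΔ hW₁ hW₂

end RCLike

lemma re_apply_self_le_sqrt {d : Type*} [Fintype d] (C : Matrix d d ℂ) (i : d) :
    (C i i).re ≤ √((star C * C) i i).re := by
  have hsum : ((star C * C) i i).re = ∑ k, ‖C k i‖ ^ 2 := by
    simp [Matrix.mul_apply, Complex.conj_mul', Complex.re_sum, ← Complex.ofReal_pow]
  calc (C i i).re ≤ ‖C i i‖ := Complex.re_le_norm _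
    _ = √(‖C i i‖ ^ 2) := (Real.sqrt_sq (norm_nonneg _)).symm
    _ ≤ √(∑ k, ‖C k i‖ ^ 2) :=
      Real.sqrt_le_sqrt (Finset.single_le_sum (fun k _ => sq_nonneg ‖C k i‖) (Finset.mem_univ i))
    _ = √((star C * C) i i).re := by rw [hsum]

lemma re_trace_le_re_trace_abs {d : Type*} [Fintype d] [DecidableEq d] (A : Matrix d d ℂ) :
    A.trace.re ≤ (CFC.abs A).trace.re := by
  have hB : (star A * A).IsHermitian := IsSelfAdjoint.star_mul_self A
  set U : Matrix d d ℂ := (hB.eigenvectorUnitary : Matrix d d ℂ)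
  -- In the eigenbasis of `A⋆A` the `i`-th column of `C` has norm `√λᵢ`, bounding `Re (C i i)`.
  set C := star U * A * U
  have hC : star C * C = diagonal (RCLike.ofReal ∘ hB.eigenvalues) := by
    rw [← hB.conjStarAlgAut_star_eigenvectorUnitary, Unitary.conjStarAlgAut_star_apply]
    simp only [C, star_mul, star_star, Matrix.mul_assoc]
    rw [← Matrix.mul_assoc U, Unitary.mul_star_self_of_mem hB.eigenvectorUnitary.2, Matrix.one_mul]
  have htrace : A.trace = C.trace := by
    rw [← trace_conjStarAlgAut (star hB.eigenvectorUnitary), Unitary.conjStarAlgAut_star_apply]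
  have habs : (CFC.abs A).trace = ∑ i, (√(hB.eigenvalues i) : ℂ) := by
    rw [CFC.abs, CFC.sqrt_eq_real_sqrt _ (star_mul_self_nonneg A), cfcₙ_eq_cfc, hB.trace_cfc]
    rfl
  rw [htrace, habs, trace, Complex.re_sum, Complex.re_sum]
  refine Finset.sum_le_sum fun i _ => ?_
  simpa [hC] using re_apply_self_le_sqrt C i

end Matrix

section TraceNorm

variable {d : Type*} [Fintype d] [DecidableEq d]

lemma psdSqrt_eq_sqrt (A : Matrix d d ℂ) : psdSqrt A = CFC.sqrt A := by
  by_cases hA : A.PosSemidef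
  · rw [psdSqrt, dif_pos hA, CFC.sqrt_eq_real_sqrt A hA.nonneg, cfcₙ_eq_cfc, hA.1.cfc_eq,
      IsHermitian.cfc, Unitary.conjStarAlgAut_apply]
    rfl
  · rw [psdSqrt, dif_neg hA, CFC.sqrt, cfcₙ_apply_of_not_predicate]
    rwa [nonneg_iff_posSemidef]

lemma traceNorm_eq_re_trace_abs (A : Matrix d d ℂ) : traceNorm A = (CFC.abs A).trace.re := by
  rw [traceNorm, psdSqrt_eq_sqrt, CFC.abs, star_eq_conjTranspose]

lemma traceNorm_nonneg (A : Matrix d d ℂ) : 0 ≤ traceNorm A := by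
  rw [traceNorm_eq_re_trace_abs]
  exact (Complex.le_def.1 (nonneg_iff_posSemidef.1 (CFC.abs_nonneg A)).trace_nonneg).1

lemma re_trace_le_traceNorm (A : Matrix d d ℂ) : A.trace.re ≤ traceNorm A := by
  rw [traceNorm_eq_re_trace_abs]
  exact re_trace_le_re_trace_abs A

lemma qFidelity_eq_traceNorm_sq {ρ : Matrix d d ℂ} (hρ : 0 ≤ ρ) (σ : Matrix d d ℂ) :
    qFidelity ρ σ = traceNorm (CFC.sqrt ρ * CFC.sqrt σ) ^ 2 := by
  have hsandwich : CFC.sqrt σ * ρ * CFC.sqrt σ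
      = star (CFC.sqrt ρ * CFC.sqrt σ) * (CFC.sqrt ρ * CFC.sqrt σ) := by
    conv_lhs => rw [← CFC.sqrt_mul_sqrt_self ρ hρ]
    simp only [star_mul, (CFC.sqrt_nonneg ρ).isSelfAdjoint.star_eq,
      (CFC.sqrt_nonneg σ).isSelfAdjoint.star_eq, Matrix.mul_assoc]
  rw [qFidelity, psdSqrt_eq_sqrt σ, hsandwich, psdSqrt_eq_sqrt, traceNorm_eq_re_trace_abs,
    CFC.abs]

end TraceNorm

/-- Fuchs–van de Graaf: `1 - √F(ρ,σ) ≤ (1/2)‖ρ - σ‖₁`. -/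
theorem stmt7 {d : Type*} [Fintype d] [DecidableEq d]
    (ρ σ : Matrix d d ℂ) (hρ : ρ.PosSemidef) (hσ : σ.PosSemidef)
    (hρ1 : ρ.trace = 1) (hσ1 : σ.trace = 1) :
    1 - Real.sqrt (qFidelity ρ σ) ≤ (1 / 2) * traceNorm (ρ - σ) := by
  have hRR : CFC.sqrt ρ * CFC.sqrt ρ = ρ := CFC.sqrt_mul_sqrt_self ρ hρ.nonneg
  have hSS : CFC.sqrt σ * CFC.sqrt σ = σ := CFC.sqrt_mul_sqrt_self σ hσ.nonneg
  set R := CFC.sqrt ρ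
  set S := CFC.sqrt σ
  have hfidelity : √(qFidelity ρ σ) = traceNorm (R * S) := by
    rw [qFidelity_eq_traceNorm_sq hρ.nonneg, Real.sqrt_sq (traceNorm_nonneg _)]
  have hPowersStormer : ((R - S) * (R - S)).trace.re ≤ traceNorm (ρ - σ) := by
    rw [traceNorm_eq_re_trace_abs, ← hRR, ← hSS]
    exact (Complex.le_def.1 (trace_sub_mul_sub_le_trace_abs (CFC.sqrt_nonneg ρ)
      (CFC.sqrt_nonneg σ))).1
  have hexpand : ((R - S) * (R - S)).trace.re = 2 - 2 * (R * S).trace.re := by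
    rw [show (R - S) * (R - S) = R * R + S * S - R * S - S * R by noncomm_ring, trace_sub,
      trace_sub, trace_add, trace_mul_comm S R, hRR, hSS, hρ1, hσ1]
    simp only [Complex.sub_re, Complex.add_re, Complex.one_re]
    ring
  linarith [re_trace_le_traceNorm (R * S)]
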